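/- Let M be a positive integer and 1 < q ≤ M+1. Denote by (α_i) and (β_i) the quasi-greedy and greedy expansions of 1 in base q. If (β_i) has a last nonzero element β_m, then (α_i) is periodic with smallest period β_1 ... β_{m−1} (β_m − 1), i.e., (α_i) = (β_1 ... β_{m−1} (β_m − 1))^∞ and no proper divisor of m is a period. Otherwise (β_i) = (α_i), and in this case the sequence (α_i) is periodic only in the extreme case q = M+1, when (β_i) = (α_i) = M^∞ (all digits equal to M). -/

import Mathlib

open Classical in
/-- The next quasi-greedy digit: the largest integer `m ≤ M` with `s + m / q ^ (n+1) < x`,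
where `s` is the value of the previously chosen digits. -/
noncomputable def qgDigit (M : ℕ) (q x s : ℝ) (n : ℕ) : ℕ :=
  Nat.findGreatest (fun m => s + (m : ℝ) / q ^ (n + 1) < x) M

/-- Partial sums of the quasi-greedy expansion of `x` in base `q` with digits `≤ M`. -/
noncomputable def qgSum (M : ℕ) (q x : ℝ) : ℕ → ℝ
  | 0 => 0
  | n + 1 => qgSum M q x n + (qgDigit M q x (qgSum M q x n) n : ℝ) / q ^ (n + 1)

/-- `quasiGreedy M q x n` is the `(n+1)`-st digit (so indexing starts at 0) of the
quasi-greedy expansion of `x` in base `q` with digits in `{0, ..., M}`: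
recursively, it is the largest integer `a_n ≤ M` with `a_1/q + ⋯ + a_n/q^n < x`. -/
noncomputable def quasiGreedy (M : ℕ) (q x : ℝ) (n : ℕ) : ℕ :=
  qgDigit M q x (qgSum M q x n) n

open Classical in
/-- The next greedy digit: the largest integer `m ≤ M` with `s + m / q ^ (n+1) ≤ x`,
where `s` is the value of the previously chosen digits. -/
noncomputable def gDigit (M : ℕ) (q x s : ℝ) (n : ℕ) : ℕ :=
  Nat.findGreatest (fun m => s + (m : ℝ) / q ^ (n + 1) ≤ x) M

/-- Partial sums of the greedy expansion of `x` in base `q` with digits `≤ M`. -/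
noncomputable def gSum (M : ℕ) (q x : ℝ) : ℕ → ℝ
  | 0 => 0
  | n + 1 => gSum M q x n + (gDigit M q x (gSum M q x n) n : ℝ) / q ^ (n + 1)

/-- `greedy M q x n` is the `(n+1)`-st digit (indexing from 0) of the greedy expansion
of `x` in base `q` with digits in `{0, ..., M}`: recursively, it is the largest
integer `b_n ≤ M` with `b_1/q + ⋯ + b_n/q^n ≤ x`. -/
noncomputable def greedy (M : ℕ) (q x : ℝ) (n : ℕ) : ℕ :=
  gDigit M q x (gSum M q x n) n

/-!
The digits of both expansions of `x` are read off the orbit of `x` under the remainder map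
`r ↦ q r - d(r)`, where `d(r) ≤ M` is the largest digit with `d ≤ q r` (greedy) or `d < q r`
(quasi-greedy); for `q ≤ M + 1` these maps keep the remainders in `[0, 1]`, resp. `(0, 1]`.
Two orbits in `[0, 1]` with the same digits separate like `q ^ n`, so the digit sequence is
periodic exactly when the orbit of `x` is. The two maps agree until the greedy remainder vanishes,
which happens right after the last nonzero greedy digit `β_m`; there the quasi-greedy digit is
`β_m - 1` and the quasi-greedy remainder returns to `1`. Finally, a greedy remainder can return
to `1` only through the digit `M`, which forces `q = M + 1`.
-/

open Function Set

/-- For the digits `d_i` of an expansion of `x`, the remainders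
`q ^ n * (x - ∑_{i<n} d_i / q ^ (i + 1))` form the orbit of `x` under this map. -/
def expansionMap (q : ℝ) (D : ℝ → ℕ) (r : ℝ) : ℝ := q * r - D r

theorem eq_zero_of_forall_abs_le_of_eq_mul {q C : ℝ} (hq : 1 < q) {e : ℕ → ℝ}
    (he : ∀ n, e (n + 1) = q * e n) (hC : ∀ n, |e n| ≤ C) : e 0 = 0 := by
  have hpow : ∀ n, e n = q ^ n * e 0 := fun n => by
    induction n with
    | zero => simp
    | succ n ih => rw [he, ih, pow_succ]; ring
  by_contra h0
  obtain ⟨n, hn⟩ := pow_unbounded_of_one_lt (C / |e 0|) hq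
  have := hC n
  rw [hpow, abs_mul, abs_of_pos (pow_pos (by linarith) n)] at this
  rw [div_lt_iff₀ (abs_pos.mpr h0)] at hn
  linarith

section expansionMap

variable {q x : ℝ} {D : ℝ → ℕ} {p : ℕ}

theorem isPeriodicPt_expansionMap_of_periodic (hq : 1 < q)
    (hx : ∀ n, (expansionMap q D)^[n] x ∈ Icc 0 1)
    (hp : Periodic (fun n => D ((expansionMap q D)^[n] x)) p) :
    IsPeriodicPt (expansionMap q D) p x := by
  set e : ℕ → ℝ := fun n => (expansionMap q D)^[n + p] x - (expansionMap q D)^[n] x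
  have he : ∀ n, e (n + 1) = q * e n := fun n => by
    simp only [e, add_right_comm n 1 p, iterate_succ_apply', expansionMap]
    rw [show D _ = D _ from hp n]
    ring
  have hC : ∀ n, |e n| ≤ 1 := fun n => by
    obtain ⟨h1, h2⟩ := hx (n + p)
    obtain ⟨h3, h4⟩ := hx n
    exact abs_sub_le_iff.mpr ⟨by linarith, by linarith⟩
  have := eq_zero_of_forall_abs_le_of_eq_mul hq he hC
  simp only [e, zero_add, iterate_zero_apply] at this
  exact sub_eq_zero.mp this

theorem periodic_digits_of_isPeriodicPt (h : IsPeriodicPt (expansionMap q D) p x) :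
    Periodic (fun n => D ((expansionMap q D)^[n] x)) p := fun n => by
  simp only [iterate_add_apply, h.eq]

end expansionMap

noncomputable def greedyDigit (M : ℕ) (q r : ℝ) : ℕ :=
  Nat.findGreatest (fun m : ℕ => (m : ℝ) ≤ q * r) M

noncomputable def quasiGreedyDigit (M : ℕ) (q r : ℝ) : ℕ :=
  Nat.findGreatest (fun m : ℕ => (m : ℝ) < q * r) M

section digits

variable {M : ℕ} {q r : ℝ}

theorem greedyDigit_le : greedyDigit M q r ≤ M := Nat.findGreatest_le M

theorem quasiGreedyDigit_le : quasiGreedyDigit M q r ≤ M := Nat.findGreatest_le M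

theorem greedyDigit_le_mul (hr : 0 ≤ q * r) : (greedyDigit M q r : ℝ) ≤ q * r :=
  Nat.findGreatest_spec (P := fun m : ℕ => (m : ℝ) ≤ q * r) (Nat.zero_le M)
    (by simpa using hr)

theorem mul_lt_greedyDigit_add_one (h : greedyDigit M q r < M) :
    q * r < greedyDigit M q r + 1 := by
  have := Nat.findGreatest_is_greatest (Nat.lt_succ_self (greedyDigit M q r)) h
  push_cast at this
  exact not_le.mp this

theorem quasiGreedyDigit_lt_mul (hr : 0 < q * r) : (quasiGreedyDigit M q r : ℝ) < q * r :=
  Nat.findGreatest_spec (P := fun m : ℕ => (m : ℝ) < q * r) (Nat.zero_le M) (by simpa using hr)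

theorem mul_le_quasiGreedyDigit_add_one (h : quasiGreedyDigit M q r < M) :
    q * r ≤ quasiGreedyDigit M q r + 1 := by
  have := Nat.findGreatest_is_greatest (Nat.lt_succ_self (quasiGreedyDigit M q r)) h
  push_cast at this
  exact not_lt.mp this

theorem expansionMap_greedyDigit_le_one (hq0 : 0 ≤ q) (hq : q ≤ M + 1) (hr : r ≤ 1) :
    expansionMap q (greedyDigit M q) r ≤ 1 := by
  unfold expansionMap
  rcases greedyDigit_le.lt_or_eq with h | h
  · linarith [mul_lt_greedyDigit_add_one h]
  · rw [h]; nlinarith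

theorem mapsTo_expansionMap_greedyDigit (hq0 : 0 ≤ q) (hq : q ≤ M + 1) :
    MapsTo (expansionMap q (greedyDigit M q)) (Icc 0 1) (Icc 0 1) := fun _ hr =>
  ⟨sub_nonneg.mpr (greedyDigit_le_mul (mul_nonneg hq0 hr.1)),
    expansionMap_greedyDigit_le_one hq0 hq hr.2⟩

theorem mapsTo_expansionMap_quasiGreedyDigit (hq0 : 0 < q) (hq : q ≤ M + 1) :
    MapsTo (expansionMap q (quasiGreedyDigit M q)) (Ioc 0 1) (Ioc 0 1) := by
  intro r ⟨hr0, hr1⟩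
  refine ⟨sub_pos.mpr (quasiGreedyDigit_lt_mul (mul_pos hq0 hr0)), ?_⟩
  unfold expansionMap
  rcases quasiGreedyDigit_le.lt_or_eq with h | h
  · linarith [mul_le_quasiGreedyDigit_add_one h]
  · rw [h]; nlinarith

theorem greedyDigit_zero : greedyDigit M q 0 = 0 :=
  Nat.findGreatest_eq_zero_iff.mpr fun n hn _ => by simpa using hn.ne'

theorem iterate_expansionMap_greedyDigit_zero (n : ℕ) :
    (expansionMap q (greedyDigit M q))^[n] 0 = 0 :=
  iterate_fixed (by simp [expansionMap, greedyDigit_zero]) n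

theorem quasiGreedyDigit_eq_greedyDigit (h : expansionMap q (greedyDigit M q) r ≠ 0) :
    quasiGreedyDigit M q r = greedyDigit M q r := by
  have hne : (greedyDigit M q r : ℝ) ≠ q * r := fun he => h (by simp [expansionMap, ← he])
  refine Nat.findGreatest_eq_iff.mpr ⟨greedyDigit_le, fun h0 => ?_, fun k hk hkM => ?_⟩
  · exact lt_of_le_of_ne (Nat.findGreatest_of_ne_zero rfl h0) hne
  · exact fun hlt => Nat.findGreatest_is_greatest hk hkM hlt.le

theorem expansionMap_quasiGreedyDigit_eq (h : expansionMap q (greedyDigit M q) r ≠ 0) :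
    expansionMap q (quasiGreedyDigit M q) r = expansionMap q (greedyDigit M q) r := by
  rw [expansionMap, quasiGreedyDigit_eq_greedyDigit h, expansionMap]

theorem quasiGreedyDigit_eq_greedyDigit_sub_one (h : expansionMap q (greedyDigit M q) r = 0)
    (hd : greedyDigit M q r ≠ 0) : quasiGreedyDigit M q r = greedyDigit M q r - 1 := by
  have he : q * r = greedyDigit M q r := sub_eq_zero.mp h
  refine Nat.findGreatest_eq_iff.mpr ⟨(Nat.sub_le _ 1).trans greedyDigit_le,
    fun _ => ?_, fun k hk _ => ?_⟩
  · rw [he, Nat.cast_sub (Nat.one_le_iff_ne_zero.mpr hd), Nat.cast_one]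
    linarith
  · rw [he, not_lt]
    exact_mod_cast (by omega : greedyDigit M q r ≤ k)

theorem expansionMap_quasiGreedyDigit_eq_one (h : expansionMap q (greedyDigit M q) r = 0)
    (hd : greedyDigit M q r ≠ 0) : expansionMap q (quasiGreedyDigit M q) r = 1 := by
  have he : q * r = greedyDigit M q r := sub_eq_zero.mp h
  rw [expansionMap, quasiGreedyDigit_eq_greedyDigit_sub_one h hd,
    Nat.cast_sub (Nat.one_le_iff_ne_zero.mpr hd), he]
  ring

theorem add_one_le_of_expansionMap_greedyDigit_eq_one (hq0 : 0 ≤ q) (hr : r ≤ 1)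
    (h : expansionMap q (greedyDigit M q) r = 1) : (M : ℝ) + 1 ≤ q := by
  unfold expansionMap at h
  rcases greedyDigit_le.lt_or_eq with hlt | heq
  · linarith [mul_lt_greedyDigit_add_one hlt]
  · rw [heq] at h; nlinarith

theorem greedyDigit_one_of_eq (hq : q = M + 1) : greedyDigit M q 1 = M :=
  Nat.findGreatest_eq (by rw [hq]; simp)

theorem isFixedPt_expansionMap_greedyDigit_one (hq : q = M + 1) :
    IsFixedPt (expansionMap q (greedyDigit M q)) 1 := by
  rw [IsFixedPt, expansionMap, greedyDigit_one_of_eq hq, hq]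
  ring

end digits

section orbit

variable {M : ℕ} {q x s : ℝ} {m n : ℕ}

theorem add_div_pow_succ_le_iff (hq : 0 < q) :
    s + (m : ℝ) / q ^ (n + 1) ≤ x ↔ (m : ℝ) ≤ q * (q ^ n * (x - s)) := by
  rw [← le_sub_iff_add_le', div_le_iff₀ (pow_pos hq _), pow_succ]
  constructor <;> intro h <;> linarith

theorem add_div_pow_succ_lt_iff (hq : 0 < q) :
    s + (m : ℝ) / q ^ (n + 1) < x ↔ (m : ℝ) < q * (q ^ n * (x - s)) := by
  rw [← lt_sub_iff_add_lt', div_lt_iff₀ (pow_pos hq _), pow_succ]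
  constructor <;> intro h <;> linarith

theorem gDigit_eq_greedyDigit (hq : 0 < q) :
    gDigit M q x s n = greedyDigit M q (q ^ n * (x - s)) := by
  simp only [gDigit, greedyDigit, add_div_pow_succ_le_iff hq]

theorem qgDigit_eq_quasiGreedyDigit (hq : 0 < q) :
    qgDigit M q x s n = quasiGreedyDigit M q (q ^ n * (x - s)) := by
  simp only [qgDigit, quasiGreedyDigit, add_div_pow_succ_lt_iff hq]

theorem pow_mul_sub_add_div_pow_succ (hq : 0 < q) (d : ℝ) :
    q ^ (n + 1) * (x - (s + d / q ^ (n + 1))) = q * (q ^ n * (x - s)) - d := by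
  have : q ^ (n + 1) ≠ 0 := (pow_pos hq _).ne'
  field_simp
  ring

theorem pow_mul_sub_gSum (hq : 0 < q) (n : ℕ) :
    q ^ n * (x - gSum M q x n) = (expansionMap q (greedyDigit M q))^[n] x := by
  induction n with
  | zero => simp [gSum]
  | succ n ih =>
    rw [gSum, iterate_succ_apply', ← ih, pow_mul_sub_add_div_pow_succ hq,
      gDigit_eq_greedyDigit hq, expansionMap]

theorem pow_mul_sub_qgSum (hq : 0 < q) (n : ℕ) :
    q ^ n * (x - qgSum M q x n) = (expansionMap q (quasiGreedyDigit M q))^[n] x := by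
  induction n with
  | zero => simp [qgSum]
  | succ n ih =>
    rw [qgSum, iterate_succ_apply', ← ih, pow_mul_sub_add_div_pow_succ hq,
      qgDigit_eq_quasiGreedyDigit hq, expansionMap]

theorem greedy_eq_greedyDigit_iterate (hq : 0 < q) (n : ℕ) :
    greedy M q x n = greedyDigit M q ((expansionMap q (greedyDigit M q))^[n] x) := by
  rw [greedy, gDigit_eq_greedyDigit hq, pow_mul_sub_gSum hq]

theorem quasiGreedy_eq_quasiGreedyDigit_iterate (hq : 0 < q) (n : ℕ) :
    quasiGreedy M q x n =
      quasiGreedyDigit M q ((expansionMap q (quasiGreedyDigit M q))^[n] x) := by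
  rw [quasiGreedy, qgDigit_eq_quasiGreedyDigit hq, pow_mul_sub_qgSum hq]

end orbit

section expansions

variable {M : ℕ} {q x : ℝ} {p : ℕ}

theorem periodic_greedy_iff (hq1 : 1 < q) (hq2 : q ≤ M + 1) (hx : x ∈ Icc 0 1) :
    Periodic (greedy M q x) p ↔ IsPeriodicPt (expansionMap q (greedyDigit M q)) p x := by
  have hq0 : 0 < q := zero_lt_one.trans hq1
  rw [show greedy M q x = _ from funext (greedy_eq_greedyDigit_iterate hq0)]
  exact ⟨isPeriodicPt_expansionMap_of_periodic hq1
    fun n => (mapsTo_expansionMap_greedyDigit hq0.le hq2).iterate n hx,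
    periodic_digits_of_isPeriodicPt⟩

theorem periodic_quasiGreedy_iff (hq1 : 1 < q) (hq2 : q ≤ M + 1) (hx : x ∈ Ioc 0 1) :
    Periodic (quasiGreedy M q x) p ↔
      IsPeriodicPt (expansionMap q (quasiGreedyDigit M q)) p x := by
  have hq0 : 0 < q := zero_lt_one.trans hq1
  rw [show quasiGreedy M q x = _ from funext (quasiGreedy_eq_quasiGreedyDigit_iterate hq0)]
  exact ⟨isPeriodicPt_expansionMap_of_periodic hq1
    fun n => Ioc_subset_Icc_self ((mapsTo_expansionMap_quasiGreedyDigit hq0 hq2).iterate n hx),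
    periodic_digits_of_isPeriodicPt⟩

theorem iterate_quasiGreedy_eq_iterate_greedy {k : ℕ}
    (h : ∀ j < k, (expansionMap q (greedyDigit M q))^[j + 1] x ≠ 0) :
    (expansionMap q (quasiGreedyDigit M q))^[k] x = (expansionMap q (greedyDigit M q))^[k] x := by
  induction k with
  | zero => rfl
  | succ k ih =>
    rw [iterate_succ_apply', iterate_succ_apply', ih fun j hj => h j (by omega),
      expansionMap_quasiGreedyDigit_eq]
    rw [← iterate_succ_apply' (expansionMap q (greedyDigit M q))]
    exact h k (by omega)

theorem iterate_greedy_ne_zero (hq : 0 < q) {j n : ℕ} (hjn : j ≤ n)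
    (hn : greedy M q x n ≠ 0) : (expansionMap q (greedyDigit M q))^[j] x ≠ 0 := by
  intro h0
  rw [greedy_eq_greedyDigit_iterate hq, ← Nat.sub_add_cancel hjn, iterate_add_apply, h0,
    iterate_expansionMap_greedyDigit_zero, greedyDigit_zero] at hn
  exact hn rfl

theorem greedy_eq_quasiGreedy_of_infinite (hq : 0 < q)
    (hinf : {n | greedy M q x n ≠ 0}.Infinite) :
    greedy M q x = quasiGreedy M q x := by
  have hne : ∀ j, (expansionMap q (greedyDigit M q))^[j] x ≠ 0 := fun j => by
    obtain ⟨n, hn, hjn⟩ := Set.Infinite.exists_gt hinf j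
    exact iterate_greedy_ne_zero hq hjn.le hn
  funext n
  rw [greedy_eq_greedyDigit_iterate hq, quasiGreedy_eq_quasiGreedyDigit_iterate hq,
    iterate_quasiGreedy_eq_iterate_greedy fun j _ => hne (j + 1),
    quasiGreedyDigit_eq_greedyDigit
      (by rw [← iterate_succ_apply' (expansionMap q _)]; exact hne _)]

end expansions

section expansionsOfOne

variable {M : ℕ} {q : ℝ} {m p : ℕ}

theorem eq_of_periodic_greedy_one (hq1 : 1 < q) (hq2 : q ≤ M + 1) (hp : 0 < p)
    (hper : Periodic (greedy M q 1) p) : q = M + 1 := by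
  have hq0 : 0 ≤ q := zero_le_one.trans hq1.le
  have h := (periodic_greedy_iff hq1 hq2 ⟨zero_le_one, le_rfl⟩).mp hper
  rw [IsPeriodicPt, IsFixedPt, ← Nat.sub_add_cancel hp, iterate_succ_apply'] at h
  have hr := ((mapsTo_expansionMap_greedyDigit hq0 hq2).iterate (p - 1)
    ⟨zero_le_one, le_rfl⟩).2
  exact le_antisymm hq2 (add_one_le_of_expansionMap_greedyDigit_eq_one hq0 hr h)

theorem greedy_one_of_eq (hq : q = M + 1) (n : ℕ) : greedy M q 1 n = M := by
  have hq0 : 0 < q := by rw [hq]; positivity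
  rw [greedy_eq_greedyDigit_iterate hq0, iterate_fixed (isFixedPt_expansionMap_greedyDigit_one hq),
    greedyDigit_one_of_eq hq]

/-- The greedy remainders after the last nonzero digit only get multiplied by `q`, and stay
in `[0, 1]`. -/
theorem iterate_greedy_one_eq_zero (hq1 : 1 < q) (hq2 : q ≤ M + 1)
    (hz : ∀ i, m < i → greedy M q 1 i = 0) :
    (expansionMap q (greedyDigit M q))^[m + 1] 1 = 0 := by
  have hq0 : 0 < q := zero_lt_one.trans hq1
  set e : ℕ → ℝ := fun i => (expansionMap q (greedyDigit M q))^[i + (m + 1)] 1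
  have he : ∀ i, e (i + 1) = q * e i := fun i => by
    simp only [e, add_right_comm i 1, iterate_succ_apply', expansionMap]
    rw [← greedy_eq_greedyDigit_iterate hq0, hz _ (by omega), Nat.cast_zero, sub_zero]
  have hC : ∀ i, |e i| ≤ 1 := fun i => by
    obtain ⟨h0, h1⟩ := (mapsTo_expansionMap_greedyDigit hq0.le hq2).iterate (i + (m + 1))
      ⟨zero_le_one, le_rfl⟩
    exact abs_le.mpr ⟨by linarith, h1⟩
  simpa [e] using eq_zero_of_forall_abs_le_of_eq_mul hq1 he hC

theorem iterate_quasiGreedy_one_eq (hq : 0 < q) (hm : greedy M q 1 m ≠ 0) {j : ℕ}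
    (hj : j ≤ m) :
    (expansionMap q (quasiGreedyDigit M q))^[j] 1 = (expansionMap q (greedyDigit M q))^[j] 1 :=
  iterate_quasiGreedy_eq_iterate_greedy fun _ hi => iterate_greedy_ne_zero hq (by omega) hm

theorem quasiGreedy_one_eq_greedy_of_lt (hq : 0 < q) (hm : greedy M q 1 m ≠ 0) {j : ℕ}
    (hj : j < m) : quasiGreedy M q 1 j = greedy M q 1 j := by
  rw [quasiGreedy_eq_quasiGreedyDigit_iterate hq, greedy_eq_greedyDigit_iterate hq,
    iterate_quasiGreedy_one_eq hq hm hj.le, quasiGreedyDigit_eq_greedyDigit]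
  rw [← iterate_succ_apply' (expansionMap q _)]
  exact iterate_greedy_ne_zero hq hj hm

theorem quasiGreedy_one_eq_greedy_sub_one (hq1 : 1 < q) (hq2 : q ≤ M + 1)
    (hm : greedy M q 1 m ≠ 0) (hz : ∀ i, m < i → greedy M q 1 i = 0) :
    quasiGreedy M q 1 m = greedy M q 1 m - 1 ∧
      IsPeriodicPt (expansionMap q (quasiGreedyDigit M q)) (m + 1) 1 := by
  have hq0 : 0 < q := zero_lt_one.trans hq1
  have h0 := iterate_greedy_one_eq_zero hq1 hq2 hz
  rw [iterate_succ_apply'] at h0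
  rw [quasiGreedy_eq_quasiGreedyDigit_iterate hq0, IsPeriodicPt, IsFixedPt, iterate_succ_apply',
    iterate_quasiGreedy_one_eq hq0 hm le_rfl]
  rw [greedy_eq_greedyDigit_iterate hq0] at hm ⊢
  exact ⟨quasiGreedyDigit_eq_greedyDigit_sub_one h0 hm,
    expansionMap_quasiGreedyDigit_eq_one h0 hm⟩


theorem quasiGreedy_one_eq_ite (hq1 : 1 < q) (hq2 : q ≤ M + 1) (hm : greedy M q 1 m ≠ 0)
    (hz : ∀ i, m < i → greedy M q 1 i = 0) (i : ℕ) :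
    quasiGreedy M q 1 i =
      if i % (m + 1) = m then greedy M q 1 m - 1 else greedy M q 1 (i % (m + 1)) := by
  obtain ⟨hlast, hper⟩ := quasiGreedy_one_eq_greedy_sub_one hq1 hq2 hm hz
  rw [← ((periodic_quasiGreedy_iff hq1 hq2 ⟨one_pos, le_rfl⟩).mpr hper).map_mod_nat i]
  split_ifs with h
  · rw [h, hlast]
  · exact quasiGreedy_one_eq_greedy_of_lt (zero_lt_one.trans hq1) hm
      (lt_of_le_of_ne (Nat.lt_succ_iff.mp (Nat.mod_lt _ m.succ_pos)) h)

/-- A shorter period would return the greedy orbit to `1` as well, making the greedy expansion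
periodic and hence not finite. -/
theorem succ_le_of_periodic_quasiGreedy_one (hq1 : 1 < q) (hq2 : q ≤ M + 1)
    (hm : greedy M q 1 m ≠ 0) (hz : ∀ i, m < i → greedy M q 1 i = 0) {p : ℕ} (hp : 0 < p)
    (hper : Periodic (quasiGreedy M q 1) p) : m + 1 ≤ p := by
  by_contra! hpm
  have hU := (periodic_quasiGreedy_iff hq1 hq2 ⟨one_pos, le_rfl⟩).mp hper
  rw [IsPeriodicPt, IsFixedPt, iterate_quasiGreedy_one_eq (zero_lt_one.trans hq1) hm
    (by omega)] at hU
  have hβ := (periodic_greedy_iff hq1 hq2 ⟨zero_le_one, le_rfl⟩).mpr hU m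
  rw [hz (m + p) (by omega)] at hβ
  exact hm hβ.symm

end expansionsOfOne

theorem quasiGreedy_one_eq_of_greedy_one (M : ℕ) (q : ℝ) (hq1 : 1 < q)
    (hq2 : q ≤ (M : ℝ) + 1) :
    (∀ m : ℕ, 1 ≤ greedy M q 1 m → (∀ i, m < i → greedy M q 1 i = 0) →
      ((∀ i, quasiGreedy M q 1 i =
          if i % (m + 1) = m then greedy M q 1 m - 1 else greedy M q 1 (i % (m + 1))) ∧
        ∀ p, 0 < p → (∀ i, quasiGreedy M q 1 (i + p) = quasiGreedy M q 1 i) →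
          m + 1 ≤ p)) ∧
    ({n | greedy M q 1 n ≠ 0}.Infinite →
      greedy M q 1 = quasiGreedy M q 1 ∧
      ((∃ p, 0 < p ∧ ∀ i, quasiGreedy M q 1 (i + p) = quasiGreedy M q 1 i) ↔
        (q = (M : ℝ) + 1 ∧ ∀ i, quasiGreedy M q 1 i = M))) := by
  refine ⟨fun m hm hz => ?_, fun hinf => ?_⟩
  · have hm' := Nat.one_le_iff_ne_zero.mp hm
    exact ⟨quasiGreedy_one_eq_ite hq1 hq2 hm' hz,
      fun p hp => succ_le_of_periodic_quasiGreedy_one hq1 hq2 hm' hz hp⟩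
  · have hβα := greedy_eq_quasiGreedy_of_infinite (zero_lt_one.trans hq1) hinf
    refine ⟨hβα, fun ⟨p, hp, hper⟩ => ?_,
      fun ⟨_, hM⟩ => ⟨1, one_pos, fun i => by rw [hM, hM]⟩⟩
    rw [← hβα] at hper ⊢
    have hq := eq_of_periodic_greedy_one hq1 hq2 hp hper
    exact ⟨hq, greedy_one_of_eq hq⟩
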